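/- arXiv:2104.05350 — 2 statements merged into one kernel-verified Lean document; each statement's English description precedes it below -/
import Mathlib

section
/- Let N be a finite index set, E : N → ℝ, d : N → ℕ positive, β₀ ∈ ℝ, p⁰ the Gibbs distribution at inverse temperature β₀, and T a left stochastic matrix with T p⁰ = p⁰. Let p be the Gibbs distribution at inverse temperature β. Then (β − β₀) · ⟨ΔQ⟩ ≥ 0, where ⟨ΔQ⟩ = ∑_{m,n} T_{mn} p_n (E_m − E_n). In particular, on average heat flows from the hotter to the colder system. -/
open Finset Real

/-!
Write `r = p / p⁰` for the likelihood ratio of the two Gibbs states. Since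
`r n / r m = exp ((β - β₀) (E m - E n))`, the quantity `(β - β₀) ⟨ΔQ⟩` equals
`∑ T m n * p n * log (r n / r m)`. The bound `log x ≥ 1 - x⁻¹` replaces this by
`∑ T m n * p n - ∑ r m * T m n * p⁰ n`, which vanishes because the columns of `T` sum to one
and `T p⁰ = p⁰`.
-/

section Stochastic

variable {N : Type*} [Fintype N] {T : N → N → ℝ} {p q : N → ℝ}

theorem sum_sum_mul_one_sub_inv_ratio_eq_zero (hT1 : ∀ n, ∑ m, T m n = 1)
    (hfix : ∀ m, ∑ n, T m n * q n = q m) (hq : ∀ n, q n ≠ 0) (hp : ∀ n, p n ≠ 0) :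
    ∑ m, ∑ n, T m n * p n * (1 - ((p n / q n) / (p m / q m))⁻¹) = 0 := by
  have hterm : ∀ m n, T m n * p n * (1 - ((p n / q n) / (p m / q m))⁻¹) =
      T m n * p n - p m / q m * (T m n * q n) := by
    intro m n
    field_simp [hq m, hq n, hp m, hp n]
  have hcols : ∑ m, ∑ n, T m n * p n = ∑ n, p n := by
    rw [sum_comm]
    exact sum_congr rfl fun n _ => by rw [← sum_mul, hT1, one_mul]
  have hrows : ∑ m, p m / q m * ∑ n, T m n * q n = ∑ m, p m :=
    sum_congr rfl fun m _ => by rw [hfix, div_mul_cancel₀ _ (hq m)]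
  simp only [hterm, sum_sub_distrib, ← mul_sum, hcols, hrows, sub_self]

theorem sum_sum_mul_log_ratio_nonneg (hT0 : ∀ m n, 0 ≤ T m n) (hT1 : ∀ n, ∑ m, T m n = 1)
    (hfix : ∀ m, ∑ n, T m n * q n = q m) (hq : ∀ n, 0 < q n) (hp : ∀ n, 0 < p n) :
    0 ≤ ∑ m, ∑ n, T m n * p n * log ((p n / q n) / (p m / q m)) := by
  rw [← sum_sum_mul_one_sub_inv_ratio_eq_zero hT1 hfix (fun n => (hq n).ne')
    (fun n => (hp n).ne')]
  gcongr with m _ n _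
  · exact mul_nonneg (hT0 m n) (hp n).le
  · exact one_sub_inv_le_log_of_pos (div_pos (div_pos (hp n) (hq n)) (div_pos (hp m) (hq m)))

end Stochastic

section Gibbs

variable {N : Type*} [Fintype N]

noncomputable def partitionFunction (g E : N → ℝ) (β : ℝ) : ℝ :=
  ∑ k, g k * exp (-β * E k)

noncomputable def gibbs (g E : N → ℝ) (β : ℝ) (n : N) : ℝ :=
  g n * exp (-β * E n) / partitionFunction g E β

variable {g : N → ℝ} (E : N → ℝ)

theorem partitionFunction_pos [Nonempty N] (hg : ∀ n, 0 < g n) (β : ℝ) :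
    0 < partitionFunction g E β :=
  sum_pos (fun k _ => mul_pos (hg k) (exp_pos _)) univ_nonempty

theorem gibbs_pos [Nonempty N] (hg : ∀ n, 0 < g n) (β : ℝ) (n : N) : 0 < gibbs g E β n :=
  div_pos (mul_pos (hg n) (exp_pos _)) (partitionFunction_pos E hg β)

theorem gibbs_div_gibbs [Nonempty N] (hg : ∀ n, 0 < g n) (β β₀ : ℝ) (n : N) :
    gibbs g E β n / gibbs g E β₀ n =
      partitionFunction g E β₀ / partitionFunction g E β * exp ((β₀ - β) * E n) := by
  have hexp : exp ((β₀ - β) * E n) = exp (-β * E n) / exp (-β₀ * E n) := by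
    rw [← exp_sub]; ring_nf
  have := partitionFunction_pos E hg β
  have := partitionFunction_pos E hg β₀
  rw [hexp, gibbs, gibbs]
  field_simp [(hg n).ne']

theorem log_gibbs_ratio_div [Nonempty N] (hg : ∀ n, 0 < g n) (β β₀ : ℝ) (m n : N) :
    log ((gibbs g E β n / gibbs g E β₀ n) / (gibbs g E β m / gibbs g E β₀ m)) =
      (β - β₀) * (E m - E n) := by
  have hZ : partitionFunction g E β₀ / partitionFunction g E β ≠ 0 :=
    (div_pos (partitionFunction_pos E hg β₀) (partitionFunction_pos E hg β)).ne'
  rw [gibbs_div_gibbs E hg, gibbs_div_gibbs E hg, mul_div_mul_left _ _ hZ, ← exp_sub, log_exp]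
  ring

end Gibbs

/-- Heat flows on average from the hotter to the colder system. -/
theorem heat_flow_direction {N : Type*} [Fintype N] [Nonempty N]
    (E : N → ℝ) (d : N → ℕ) (hd : ∀ n, 0 < d n) (β₀ β : ℝ)
    (T : N → N → ℝ) (hT0 : ∀ m n, 0 ≤ T m n) (hT1 : ∀ n, ∑ m, T m n = 1)
    (p0 p : N → ℝ)
    (hp0 : ∀ n, p0 n = (d n : ℝ) * Real.exp (-β₀ * E n) /
      (∑ k, (d k : ℝ) * Real.exp (-β₀ * E k)))
    (hp : ∀ n, p n = (d n : ℝ) * Real.exp (-β * E n) /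
      (∑ k, (d k : ℝ) * Real.exp (-β * E k)))
    (hfix : ∀ m, ∑ n, T m n * p0 n = p0 m) :
    0 ≤ (β - β₀) * ∑ m, ∑ n, T m n * p n * (E m - E n) := by
  have hg : ∀ n, 0 < (d n : ℝ) := fun n => Nat.cast_pos.mpr (hd n)
  obtain rfl : p0 = gibbs (fun n => (d n : ℝ)) E β₀ := funext hp0
  obtain rfl : p = gibbs (fun n => (d n : ℝ)) E β := funext hp
  convert sum_sum_mul_log_ratio_nonneg hT0 hT1 hfix (gibbs_pos E hg β₀) (gibbs_pos E hg β)
    using 1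
  simp only [log_gibbs_ratio_div E hg, mul_sum]
  exact sum_congr rfl fun m _ => sum_congr rfl fun n _ => by ring
end

section
/- Let N be a finite set, E : N → ℝ, d : N → ℕ positive, β ∈ ℝ, and p the Gibbs distribution at inverse temperature β. Let t be an N × N real matrix with all column sums zero, and for small ε let q^ε := p + ε t p (the first-order action of T = I + ε t). Then the first-order changes of entropy and energy satisfy the Clausius equality at first order: d/dε|_{ε=0} S(q^ε) = β · d/dε|_{ε=0} E(q^ε), where S(r) = −∑_n r_n log(r_n/d_n) and E(r) = ∑_n r_n E_n. -/
/-!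
Since `T` is left stochastic, the perturbation `v = t p` has total mass zero. Differentiating at
`ε = 0`, the entropy changes by `-∑ vₙ (log (pₙ / dₙ) + 1)`, and for the Gibbs state
`log (pₙ / dₙ) = -β Eₙ - log Z` (`Z` the partition function) is affine in the energy, so the
constant parts `log Z` and `1` are killed by `∑ vₙ = 0` and only `β ∑ vₙ Eₙ` survives.
-/

open Finset Real

theorem hasDerivAt_mul_log_div {x c : ℝ} (hx : x ≠ 0) (hc : c ≠ 0) :
    HasDerivAt (fun y => y * log (y / c)) (log (x / c) + 1) x := by
  have hlog := ((hasDerivAt_id' x).div_const c).log (div_ne_zero hx hc)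
  refine ((hasDerivAt_id' x).fun_mul hlog).congr_deriv ?_
  field_simp

theorem hasDerivAt_const_add_mul (a v x : ℝ) : HasDerivAt (fun ε => a + ε * v) v x := by
  simpa using ((hasDerivAt_id x).mul_const v).const_add a

section Perturbation

variable {N : Type*} [Fintype N]

theorem hasDerivAt_entropy_perturb {p v w : N → ℝ} (hp : ∀ n, p n ≠ 0) (hw : ∀ n, w n ≠ 0) :
    HasDerivAt (fun ε => -∑ n, (p n + ε * v n) * log ((p n + ε * v n) / w n))
      (-∑ n, v n * (log (p n / w n) + 1)) 0 := by
  refine (HasDerivAt.fun_sum fun n _ => ?_).neg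
  rw [mul_comm]
  exact (hasDerivAt_mul_log_div (hp n) (hw n)).comp_of_eq 0
    (hasDerivAt_const_add_mul (p n) (v n) 0) (by ring)

theorem hasDerivAt_energy_perturb (E p v : N → ℝ) :
    HasDerivAt (fun ε => ∑ n, (p n + ε * v n) * E n) (∑ n, v n * E n) 0 :=
  HasDerivAt.fun_sum fun n _ => (hasDerivAt_const_add_mul (p n) (v n) 0).mul_const (E n)

theorem sum_sum_mul_eq_zero_of_sum_col_eq_zero {t : N → N → ℝ} (ht : ∀ n, ∑ m, t m n = 0)
    (p : N → ℝ) : ∑ n, ∑ m, t n m * p m = 0 := by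
  rw [Finset.sum_comm]
  simp only [← Finset.sum_mul, ht, zero_mul, Finset.sum_const_zero]

theorem neg_sum_mul_log_add_one_eq {v E ℓ : N → ℝ} {β Z : ℝ} (hv : ∑ n, v n = 0)
    (hℓ : ∀ n, ℓ n = -β * E n - Z) :
    -∑ n, v n * (ℓ n + 1) = β * ∑ n, v n * E n := by
  have hsplit : ∑ n, v n * (ℓ n + 1) = -β * ∑ n, v n * E n + (1 - Z) * ∑ n, v n := by
    simp only [hℓ, Finset.mul_sum, ← Finset.sum_add_distrib]
    exact Finset.sum_congr rfl fun n _ => by ring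
  rw [hsplit, hv]
  ring

end Perturbation

section Gibbs

variable {N : Type*} [Fintype N] (E : N → ℝ) (d : N → ℕ) (β : ℝ)

theorem gibbs_partition_pos {n : N} (hn : 0 < d n) :
    0 < ∑ k, (d k : ℝ) * exp (-β * E k) :=
  Finset.sum_pos' (fun k _ => by positivity)
    ⟨n, Finset.mem_univ n, mul_pos (by exact_mod_cast hn) (exp_pos _)⟩

theorem gibbs_pos_s13 {n : N} (hn : 0 < d n) :
    0 < (d n : ℝ) * exp (-β * E n) / ∑ k, (d k : ℝ) * exp (-β * E k) :=
  div_pos (mul_pos (by exact_mod_cast hn) (exp_pos _)) (gibbs_partition_pos E d β hn)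

theorem log_gibbs_div {n : N} (hn : 0 < d n) :
    log ((d n : ℝ) * exp (-β * E n) / (∑ k, (d k : ℝ) * exp (-β * E k)) / d n) =
      -β * E n - log (∑ k, (d k : ℝ) * exp (-β * E k)) := by
  rw [mul_div_assoc, mul_div_cancel_left₀ _ (by exact_mod_cast hn.ne'),
    log_div (exp_ne_zero _) (gibbs_partition_pos E d β hn).ne', log_exp]

end Gibbs

theorem clausius_equality_first_order_general {N : Type*} [Fintype N]
    (E : N → ℝ) (d : N → ℕ) (hd : ∀ n, 0 < d n) (β : ℝ)
    (p : N → ℝ)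
    (hp : ∀ n, p n = (d n : ℝ) * Real.exp (-β * E n) /
      (∑ k, (d k : ℝ) * Real.exp (-β * E k)))
    (t : N → N → ℝ) (ht : ∀ n, ∑ m, t m n = 0)
    (q : ℝ → N → ℝ)
    (hq : ∀ ε n, q ε n = p n + ε * ∑ m, t n m * p m) :
    deriv (fun ε => -(∑ n, q ε n * Real.log (q ε n / (d n : ℝ)))) 0 =
      β * deriv (fun ε => ∑ n, q ε n * E n) 0 := by
  obtain rfl : q = fun ε n => p n + ε * ∑ m, t n m * p m := funext₂ hq
  have hp_ne : ∀ n, p n ≠ 0 := fun n => hp n ▸ (gibbs_pos_s13 E d β (hd n)).ne'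
  have hd_ne : ∀ n, (d n : ℝ) ≠ 0 := fun n => by exact_mod_cast (hd n).ne'
  rw [(hasDerivAt_entropy_perturb hp_ne hd_ne).deriv, (hasDerivAt_energy_perturb E p _).deriv]
  refine neg_sum_mul_log_add_one_eq (Z := log (∑ k, (d k : ℝ) * exp (-β * E k)))
    (sum_sum_mul_eq_zero_of_sum_col_eq_zero ht p) fun n => ?_
  rw [hp n, log_gibbs_div E d β (hd n)]

/-- Clausius equality at first order (weak-coupling limit). -/
theorem clausius_equality_first_order {N : Type*} [Fintype N] [Nonempty N]
    (E : N → ℝ) (d : N → ℕ) (hd : ∀ n, 0 < d n) (β : ℝ)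
    (p : N → ℝ)
    (hp : ∀ n, p n = (d n : ℝ) * Real.exp (-β * E n) /
      (∑ k, (d k : ℝ) * Real.exp (-β * E k)))
    (t : N → N → ℝ) (ht : ∀ n, ∑ m, t m n = 0)
    (q : ℝ → N → ℝ)
    (hq : ∀ ε n, q ε n = p n + ε * ∑ m, t n m * p m) :
    deriv (fun ε => -(∑ n, q ε n * Real.log (q ε n / (d n : ℝ)))) 0 =
      β * deriv (fun ε => ∑ n, q ε n * E n) 0 :=
  clausius_equality_first_order_general E d hd β p hp t ht q hq
end
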